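/- Let R be a ring and let S = Soc(R_R) be its right socle, which is a two-sided ideal of R. If the quotient ring R/S is J-reversible (i.e., for all x, y ∈ R/S, xy = 0 implies yx ∈ J(R/S)), then R is δ-reversible. -/

import Mathlib

/-- A right ideal `I` of `R` (a submodule of `R` as a right `R`-module, i.e. an
`Rᵐᵒᵖ`-submodule) is essential if every right ideal meeting it trivially is trivial. -/
def IsEssentialRightIdeal (R : Type*) [Ring R] (I : Submodule Rᵐᵒᵖ R) : Prop :=
  ∀ K : Submodule Rᵐᵒᵖ R, K ⊓ I = ⊥ → K = ⊥

/-- The Zhou radical `δ(R)`: the intersection of all essential maximal right ideals of `R`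
(the whole ring if there are no essential maximal right ideals). -/
def zhouRadical (R : Type*) [Ring R] : Set R :=
  ⋂₀ { S : Set R | ∃ I : Submodule Rᵐᵒᵖ R, IsCoatom I ∧ IsEssentialRightIdeal R I ∧ S = ↑I }

/-- A ring `R` is `δ`-reversible if `a * b = 0` implies `b * a ∈ δ(R)`. -/
def IsDeltaReversible (R : Type*) [Ring R] : Prop :=
  ∀ a b : R, a * b = 0 → b * a ∈ zhouRadical R

/-- The Jacobson radical `J(S)`: the intersection of all maximal right ideals of `S`. -/
def jacobsonRight (S : Type*) [Ring S] : Set S :=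
  ⋂₀ { T : Set S | ∃ I : Submodule Sᵐᵒᵖ S, IsCoatom I ∧ T = ↑I }

/-- A ring `S` is J-reversible if `x * y = 0` implies `y * x ∈ J(S)`. -/
def IsJReversible (S : Type*) [Ring S] : Prop :=
  ∀ x y : S, x * y = 0 → y * x ∈ jacobsonRight S

/-- The right socle of `R`: the sum of all minimal (simple) right ideals of `R`. -/
def rightSocle (R : Type*) [Ring R] : Submodule Rᵐᵒᵖ R :=
  sSup {I : Submodule Rᵐᵒᵖ R | IsAtom I}


/-!
Every essential right ideal contains every minimal right ideal, hence the right socle `S`.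
So an essential maximal right ideal `I` contains `S`, and its image in `R/S` is a maximal
right ideal whose preimage is `I` again. If `ab = 0` then `π(b)π(a) ∈ J(R/S)` lies in that
image, so `ba ∈ I`.
-/

theorem rightSocle_le_of_isEssentialRightIdeal {R : Type*} [Ring R] {I : Submodule Rᵐᵒᵖ R}
    (hI : IsEssentialRightIdeal R I) : rightSocle R ≤ I := by
  refine sSup_le fun A hA => ?_
  rcases hA.le_iff.mp (inf_le_left : A ⊓ I ≤ A) with hbot | heq
  · exact absurd (hI A hbot) hA.1
  · exact heq ▸ inf_le_right

def RingHom.toOpSemilinearMap {R Q : Type*} [Ring R] [Ring Q] (f : R →+* Q) :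
    R →ₛₗ[RingHom.op f] Q where
  toFun := f
  map_add' := map_add f
  map_smul' r x := map_mul f x r.unop

theorem mem_of_map_mem_jacobsonRight {R Q : Type*} [Ring R] [Ring Q] {f : R →+* Q}
    (hf : Function.Surjective f) {I : Submodule Rᵐᵒᵖ R} (hI : IsCoatom I)
    (hker : ∀ x, f x = 0 → x ∈ I) {x : R} (hx : f x ∈ jacobsonRight Q) : x ∈ I := by
  have : RingHomSurjective (RingHom.op f) :=
    ⟨fun q => let ⟨r, hr⟩ := hf q.unop; ⟨MulOpposite.op r, congrArg MulOpposite.op hr⟩⟩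
  let g := f.toOpSemilinearMap
  have hkerI : LinearMap.ker g ≤ I := hker
  have hmap : IsCoatom (I.map g) := Submodule.isCoatom_map_of_ker_le hf hkerI hI
  have hgx : g x ∈ I.map g := hx _ ⟨_, hmap, rfl⟩
  rwa [← Submodule.mem_comap, Submodule.comap_map_eq_self hkerI] at hgx

/-- If the quotient of `R` by its right socle (a two-sided ideal) is J-reversible,
then `R` is δ-reversible. -/
theorem deltaReversible_of_quotient_socle_jReversible (R : Type*) [Ring R]
    (S : TwoSidedIdeal R) (hS : (S : Set R) = (rightSocle R : Set R))
    (h : IsJReversible S.ringCon.Quotient) :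
    IsDeltaReversible R := by
  rintro a b hab _ ⟨I, hI, hIess, rfl⟩
  let π := S.ringCon.mk'
  have hker : ∀ x, π x = 0 → x ∈ I := fun x hx =>
    rightSocle_le_of_isEssentialRightIdeal hIess <| by
      rw [← SetLike.mem_coe, ← hS, SetLike.mem_coe, S.mem_iff]
      exact S.ringCon.eq.mp hx
  refine mem_of_map_mem_jacobsonRight S.ringCon.mk'_surjective hI hker ?_
  rw [map_mul]
  exact h (π a) (π b) (by rw [← map_mul, hab, map_zero])
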